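/- arXiv:nlin/0212007 — 4 statements merged into one kernel-verified Lean document; each statement's English description precedes it below -/
import Mathlib

section
/- Fix an integer n ≥ 1. Let f : ℂⁿ → ℂⁿ be the ladder vector field, f(x)_i = x_i · Σ_{j=1}^n (i − j + 1) x_j. For all indices 1 ≤ l, m ≤ n, the vector field Y^l_m with components Y^l_m(x)_i = x_m · u(x)^{l−m−1} · (x_i − δ_{i,l} u(x)) (integer power) is a Lie symmetry of the ladder system, i.e. the Lie bracket [f, Y^l_m](x) = 0 for every x ∈ ℂⁿ with u(x) ≠ 0. -/
/-- `u x = ∑ j x_j`. -/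
noncomputable def u (n : ℕ) (x : Fin n → ℂ) : ℂ := ∑ j, x j

/-- The vector fields `Y^l_m`, with components
`Y^l_m(x)_i = x_m * u(x)^(l-m-1) * (x_i - δ_{i,l} u(x))` (integer power). -/
noncomputable def Y (n : ℕ) (l m : Fin n) (x : Fin n → ℂ) : Fin n → ℂ :=
  fun i => x m * u n x ^ ((l : ℤ) - (m : ℤ) - 1) * (x i - if i = l then u n x else 0)

/-- The Lie bracket `[V,W](x) = DW(x)·V(x) - DV(x)·W(x)`. -/
noncomputable def lieBracket (n : ℕ) (V W : (Fin n → ℂ) → Fin n → ℂ)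
    (x : Fin n → ℂ) : Fin n → ℂ :=
  fderiv ℂ W x (V x) - fderiv ℂ V x (W x)

/-!
The ladder field is `f_i = x_i A_i(x)` with `A_i = (i + 1) u - s` and `s = Σ_j j x_j`
(indices from `0`), so `u(f) = u²`. Write `Y^l_m = φ • Z` with `φ = x_m u^(l-m-1)` and the
linear map `Z x = x - u(x) e_l`. Then `Dφ · f = (l u - s) φ` and `[f, Z] = -(l u - s) Z`, so
the Leibniz rule `[f, φ Z] = (Dφ · f) Z + φ [f, Z]` gives zero.
-/

open ContinuousLinearMap

noncomputable section

namespace LadderSymmetry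

variable {n : ℕ}

theorem lieBracket_smul {V : (Fin n → ℂ) → Fin n → ℂ} {φ : (Fin n → ℂ) → ℂ}
    {Z : (Fin n → ℂ) → Fin n → ℂ} {x : Fin n → ℂ} (hφ : DifferentiableAt ℂ φ x)
    (hZ : DifferentiableAt ℂ Z x) :
    lieBracket n V (fun y => φ y • Z y) x =
      fderiv ℂ φ x (V x) • Z x + φ x • lieBracket n V Z x := by
  simp only [lieBracket, fderiv_fun_smul hφ hZ, add_apply, FunLike.coe_smul, Pi.smul_apply,
    smulRight_apply, map_smul]
  module

theorem lieBracket_continuousLinearMap (V : (Fin n → ℂ) → Fin n → ℂ)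
    (L : (Fin n → ℂ) →L[ℂ] Fin n → ℂ) (x : Fin n → ℂ) : lieBracket n V L x = L (V x) - fderiv ℂ V x (L x) := by
  rw [lieBracket, L.fderiv]

def sumCLM (n : ℕ) : (Fin n → ℂ) →L[ℂ] ℂ := ∑ j, proj j

@[simp]
theorem sumCLM_apply (y : Fin n → ℂ) : sumCLM n y = u n y := by
  simp [sumCLM, u]

theorem hasFDerivAt_u (x : Fin n → ℂ) : HasFDerivAt (u n) (sumCLM n) x := by
  convert (sumCLM n).hasFDerivAt
  ext; simp

def ladderRate (n : ℕ) (i : Fin n) : (Fin n → ℂ) →L[ℂ] ℂ :=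
  ∑ j : Fin n, (((i : ℤ) - (j : ℤ) + 1 : ℤ) : ℂ) • proj j

theorem ladderRate_apply (i : Fin n) (y : Fin n → ℂ) :
    ladderRate n i y = ∑ j : Fin n, (((i : ℤ) - (j : ℤ) + 1 : ℤ) : ℂ) * y j := by
  simp [ladderRate]

def moment (y : Fin n → ℂ) : ℂ := ∑ j : Fin n, (j : ℂ) * y j

theorem ladderRate_eq (i : Fin n) (y : Fin n → ℂ) :
    ladderRate n i y = ((i : ℂ) + 1) * u n y - moment y := by
  simp only [ladderRate_apply, u, moment, Finset.mul_sum, ← Finset.sum_sub_distrib]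
  congr! 1 with j
  push_cast
  ring

def ladder (n : ℕ) (x : Fin n → ℂ) : Fin n → ℂ := fun i => x i * ladderRate n i x

theorem u_ladder (x : Fin n → ℂ) : u n (ladder n x) = u n x ^ 2 := by
  have h : ∀ i, ladder n x i = (i : ℂ) * x i * u n x + x i * u n x - x i * moment x := by
    intro i
    rw [ladder, ladderRate_eq]
    ring
  simp only [u, h, Finset.sum_sub_distrib, Finset.sum_add_distrib, ← Finset.sum_mul]
  rw [← moment, ← u]
  ring

theorem hasFDerivAt_ladder (x : Fin n → ℂ) :
    HasFDerivAt (ladder n)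
      (pi fun i => x i • ladderRate n i + ladderRate n i x • proj i) x :=
  hasFDerivAt_pi.2 fun i => (hasFDerivAt_apply i x).mul (ladderRate n i).hasFDerivAt

def hyperplaneProj (l : Fin n) : (Fin n → ℂ) →L[ℂ] Fin n → ℂ :=
  .id ℂ _ - (single ℂ (fun _ => ℂ) l).comp (sumCLM n)

theorem hyperplaneProj_apply (l : Fin n) (y : Fin n → ℂ) (i : Fin n) :
    hyperplaneProj l y i = y i - if i = l then u n y else 0 := by
  simp [hyperplaneProj, Pi.single_apply]

theorem u_hyperplaneProj (l : Fin n) (y : Fin n → ℂ) : u n (hyperplaneProj l y) = 0 := by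
  simp [u, hyperplaneProj_apply, Finset.sum_sub_distrib]

theorem moment_hyperplaneProj (l : Fin n) (y : Fin n → ℂ) :
    moment (hyperplaneProj l y) = moment y - l * u n y := by
  simp [moment, hyperplaneProj_apply, mul_sub, Finset.sum_sub_distrib]

theorem Y_eq_smul (l m : Fin n) :
    Y n l m = fun y => (y m * u n y ^ ((l : ℤ) - m - 1)) • hyperplaneProj l y := by
  ext y i
  simp [Y, hyperplaneProj_apply, mul_assoc]

theorem lieBracket_ladder_hyperplaneProj (l : Fin n) (x : Fin n → ℂ) :
    lieBracket n (ladder n) (hyperplaneProj l) x =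
      -((l : ℂ) * u n x - moment x) • hyperplaneProj l x := by
  ext i
  rw [lieBracket_continuousLinearMap, (hasFDerivAt_ladder x).fderiv]
  simp only [Pi.sub_apply, Pi.smul_apply, pi_apply, add_apply, FunLike.coe_smul, smul_eq_mul,
    proj_apply, hyperplaneProj_apply, u_ladder, ladder, ladderRate_eq, u_hyperplaneProj,
    moment_hyperplaneProj]
  split_ifs with hil
  · subst hil
    ring
  · ring

theorem fderiv_mul_zpow_u_ladder (m : Fin n) (p : ℤ) {x : Fin n → ℂ} (hx : u n x ≠ 0) :
    fderiv ℂ (fun y => y m * u n y ^ p) x (ladder n x) =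
      (((m : ℂ) + 1 + p) * u n x - moment x) * (x m * u n x ^ p) := by
  have hzpow : HasFDerivAt (fun y => u n y ^ p) ((p * u n x ^ (p - 1)) • sumCLM n) x :=
    (hasDerivAt_zpow p _ (.inl hx)).comp_hasFDerivAt x (hasFDerivAt_u x)
  rw [((hasFDerivAt_apply m x).fun_mul hzpow).fderiv]
  simp only [add_apply, smul_apply, sumCLM_apply, u_ladder, smul_eq_mul, proj_apply, ladder,
    ladderRate_eq]
  rw [zpow_sub_one₀ hx]
  field_simp
  ring

end LadderSymmetry

end

open LadderSymmetry in
theorem stmt_0_general (n : ℕ)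
    (f : (Fin n → ℂ) → Fin n → ℂ)
    (hf : ∀ x i, f x i = x i * ∑ j : Fin n, (((i : ℤ) - (j : ℤ) + 1 : ℤ) : ℂ) * x j) :
    ∀ l m : Fin n, ∀ x : Fin n → ℂ, u n x ≠ 0 →
      lieBracket n f (Y n l m) x = 0 := by
  intro l m x hx
  obtain rfl : f = ladder n := funext₂ fun y i => by rw [hf, ladder, ladderRate_apply]
  have hφ : DifferentiableAt ℂ (fun y => y m * u n y ^ ((l : ℤ) - m - 1)) x :=
    (differentiableAt_apply m x).mul ((hasFDerivAt_u x).differentiableAt.zpow (.inl hx))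
  have hl : (m : ℂ) + 1 + (((l : ℤ) - m - 1 : ℤ) : ℂ) = l := by push_cast; ring
  rw [Y_eq_smul, lieBracket_smul hφ (hyperplaneProj l).differentiableAt,
    fderiv_mul_zpow_u_ladder m _ hx, lieBracket_ladder_hyperplaneProj, hl]
  module

/-- each `Y^l_m` is a Lie symmetry of the ladder system
`f(x)_i = x_i ∑_j (i - j + 1) x_j` on the set where `u(x) ≠ 0`. -/
theorem stmt_0 (n : ℕ) (hn : 1 ≤ n)
    (f : (Fin n → ℂ) → Fin n → ℂ)
    (hf : ∀ x i, f x i = x i * ∑ j : Fin n, (((i : ℤ) - (j : ℤ) + 1 : ℤ) : ℂ) * x j) :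
    ∀ l m : Fin n, ∀ x : Fin n → ℂ, u n x ≠ 0 →
      lieBracket n f (Y n l m) x = 0 :=
  stmt_0_general n f hf
end

section
/- Fix an integer n ≥ 1. Let a : {1,…,n} × {1,…,n} → ℂ be coefficients such that Σ_{l,m=1}^n a(l,m) · Y^l_m(x) = 0 for every x ∈ ℂⁿ with u(x) ≠ 0. Then a(l,m) = 0 whenever l ≠ m, and all diagonal coefficients are equal: a(1,1) = a(2,2) = … = a(n,n). Consequently (combined with the identity Σ_{l=1}^n Y^l_l = 0), the complex linear span of the vector fields { Y^l_m : 1 ≤ l, m ≤ n } on { x : u(x) ≠ 0 } has dimension n² − 1. -/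
/-!
Each `Y^l_m` is homogeneous of degree `l - m + 1` under `x ↦ t • x`, so a linear relation
splits into one relation for each value of `l - m`. Evaluating the piece with `l - m = d` at
the basis vector `e_m` isolates `a l m` when `l ≠ m`; the piece `l = m` evaluated at
`e_j + e_k` gives `a j j = a k k`. Together with `∑ l, Y^l_l = 0`, the kernel of
`a ↦ ∑ a l m • Y^l_m` is the line of scalar matrices, and rank–nullity gives `n² - 1`.
-/

open Polynomial in
theorem Finset.sum_filter_eq_zero_of_forall_sum_mul_zpow_eq_zero {K ι : Type*} [Field K]
    [Infinite K] (s : Finset ι) (c : ι → K) (e : ι → ℤ)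
    (h : ∀ t : K, t ≠ 0 → ∑ i ∈ s, c i * t ^ e i = 0) (d : ℤ) :
    ∑ i ∈ s with e i = d, c i = 0 := by
  -- shift all exponents by `N` to turn the Laurent polynomial into a polynomial
  set N : ℕ := ∑ i ∈ s, (e i).natAbs
  have hN : ∀ i ∈ s, 0 ≤ e i + N := fun i hi => by
    have := Finset.single_le_sum (f := fun i => (e i).natAbs) (fun _ _ => Nat.zero_le _) hi
    omega
  obtain hd | hd := lt_or_ge (d + N) 0
  · exact Finset.sum_eq_zero fun i hi => by
      rw [Finset.mem_filter] at hi; have := hN i hi.1; omega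
  set P : K[X] := ∑ i ∈ s, C (c i) * X ^ (e i + N).toNat
  have hP : P = 0 := by
    refine P.eq_zero_of_infinite_isRoot ((Set.finite_singleton 0).infinite_compl.mono ?_)
    intro t (ht : t ≠ 0)
    have hpow : ∀ i ∈ s, t ^ (e i + N).toNat = t ^ e i * t ^ N := fun i hi => by
      rw [← zpow_natCast, Int.toNat_of_nonneg (hN i hi), zpow_add₀ ht, zpow_natCast]
    simp only [Set.mem_ofPred_eq, IsRoot, P, eval_finsetSum, eval_mul, eval_C, eval_pow, eval_X]
    calc ∑ i ∈ s, c i * t ^ (e i + N).toNat = (∑ i ∈ s, c i * t ^ e i) * t ^ N := by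
          rw [Finset.sum_mul]
          exact Finset.sum_congr rfl fun i hi => by rw [hpow i hi, mul_assoc]
      _ = 0 := by rw [h t ht, zero_mul]
  calc ∑ i ∈ s with e i = d, c i = P.coeff (d + N).toNat := by
        simp only [P, finsetSum_coeff, coeff_C_mul, coeff_X_pow, mul_ite, mul_one, mul_zero,
          Finset.sum_filter]
        exact Finset.sum_congr rfl fun i hi => if_congr (by have := hN i hi; omega) rfl rfl
    _ = 0 := by rw [hP, coeff_zero]

noncomputable def restrictedY (n : ℕ) (p : Fin n × Fin n) :
    {x : Fin n → ℂ // u n x ≠ 0} → Fin n → ℂ :=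
  fun x => Y n p.1 p.2 x.1

section

variable {n : ℕ} {a : Fin n → Fin n → ℂ}

theorem u_smul (t : ℂ) (x : Fin n → ℂ) : u n (t • x) = t * u n x := by
  simp [u, Finset.mul_sum]

theorem Y_smul {t : ℂ} (ht : t ≠ 0) (l m : Fin n) (x : Fin n → ℂ) :
    Y n l m (t • x) = t ^ ((l : ℤ) - m + 1) • Y n l m x := by
  ext i
  have hexp : (l : ℤ) - m + 1 = ((l : ℤ) - m - 1) + 1 + 1 := by ring
  simp only [Y, u_smul, Pi.smul_apply, smul_eq_mul, mul_zpow, hexp, zpow_add₀ ht, zpow_one]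
  split_ifs <;> ring

theorem Y_diag {x : Fin n → ℂ} (hx : u n x ≠ 0) (l i : Fin n) :
    Y n l l x i = x l * x i / u n x - if i = l then x l else 0 := by
  simp only [Y, sub_self, zero_sub, zpow_neg_one]
  split_ifs
  · field_simp
  · ring

theorem sum_Y_diag {x : Fin n → ℂ} (hx : u n x ≠ 0) : ∑ l, Y n l l x = 0 := by
  ext i
  simp only [Finset.sum_apply, Y_diag hx, Finset.sum_sub_distrib, Finset.sum_ite_eq,
    Finset.mem_univ, if_true, ← Finset.sum_div, ← Finset.sum_mul, Pi.zero_apply]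
  rw [show ∑ l, x l = u n x from rfl, mul_div_cancel_left₀ _ hx, sub_self]

def IsYRelation (a : Fin n → Fin n → ℂ) : Prop :=
  ∀ x : Fin n → ℂ, u n x ≠ 0 → ∑ l : Fin n, ∑ m : Fin n, a l m • Y n l m x = 0

theorem IsYRelation.sum_filter_eq_zero (ha : IsYRelation a)
    (d : ℤ) {x : Fin n → ℂ} (hx : u n x ≠ 0) (i : Fin n) :
    ∑ p : Fin n × Fin n with (p.1 : ℤ) - p.2 = d, a p.1 p.2 * Y n p.1 p.2 x i = 0 := by
  have hscaled (t : ℂ) (ht : t ≠ 0) :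
      ∑ p : Fin n × Fin n, a p.1 p.2 * Y n p.1 p.2 x i * t ^ ((p.1 : ℤ) - p.2 + 1) = 0 := by
    have h := congrFun (ha (t • x) (by rw [u_smul]; exact mul_ne_zero ht hx)) i
    simp only [Y_smul ht, Finset.sum_apply, Pi.smul_apply, smul_eq_mul, Pi.zero_apply] at h
    rw [← h, Fintype.sum_prod_type]
    exact Finset.sum_congr rfl fun l _ => Finset.sum_congr rfl fun m _ => by ring
  have h := Finset.sum_filter_eq_zero_of_forall_sum_mul_zpow_eq_zero _ _ _ hscaled (d + 1)
  simpa only [add_left_inj] using h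

theorem u_single (m : Fin n) : u n (Pi.single m 1) = 1 := by
  simp [u]

theorem IsYRelation.apply_eq_zero_of_ne (ha : IsYRelation a) {l m : Fin n} (hlm : l ≠ m) :
    a l m = 0 := by
  have h := ha.sum_filter_eq_zero ((l : ℤ) - m) (x := Pi.single m 1)
    (by rw [u_single]; exact one_ne_zero) m
  rw [Finset.sum_eq_single_of_mem (l, m) (by simp) fun p hp hpne => ?_] at h
  · simpa [Y, u_single, hlm.symm] using h
  · have hp2 : p.2 ≠ m := by
      rintro h2
      simp only [Finset.mem_filter, Finset.mem_univ, true_and, h2] at hp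
      exact hpne (Prod.ext (Fin.ext (show (p.1 : ℕ) = l by omega)) h2)
    simp [Y, hp2]

theorem IsYRelation.sum_diag_mul_div (ha : IsYRelation a) {x : Fin n → ℂ} (hx : u n x ≠ 0)
    (i : Fin n) : (∑ l, a l l * x l) * x i / u n x = a i i * x i := by
  have h := ha.sum_filter_eq_zero 0 hx i
  simp only [Finset.sum_filter, Fintype.sum_prod_type, sub_eq_zero, Nat.cast_inj, Fin.val_inj,
    Finset.sum_ite_eq, Finset.mem_univ, if_true, Y_diag hx, mul_sub, mul_ite, mul_zero,
    Finset.sum_sub_distrib] at h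
  rw [← h, Finset.sum_mul, Finset.sum_div]
  exact Finset.sum_congr rfl fun l _ => by ring

theorem IsYRelation.apply_diag_eq (ha : IsYRelation a) (j k : Fin n) : a j j = a k k := by
  rcases eq_or_ne j k with rfl | hjk
  · rfl
  set x : Fin n → ℂ := Pi.single j 1 + Pi.single k 1
  have hx : u n x = 2 := by
    simp [x, u, Finset.sum_add_distrib, one_add_one_eq_two]
  have h := ha.sum_diag_mul_div (x := x) (by rw [hx]; exact two_ne_zero) j
  simp only [x, hx, Pi.add_apply, Pi.single_apply, mul_add, mul_ite, mul_one, mul_zero,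
    Finset.sum_add_distrib, Finset.sum_ite_eq', Finset.mem_univ, if_true, if_neg hjk,
    add_zero] at h
  linear_combination -2 * h

theorem mem_ker_linearCombination_restrictedY {b : Fin n × Fin n → ℂ} :
    b ∈ LinearMap.ker (Fintype.linearCombination ℂ (restrictedY n)) ↔
      IsYRelation (Function.curry b) := by
  simp only [LinearMap.mem_ker, Fintype.linearCombination_apply, Fintype.sum_prod_type,
    funext_iff, Subtype.forall, IsYRelation, Finset.sum_apply, Pi.smul_apply, restrictedY,
    Function.curry_apply, Pi.zero_apply]

theorem ker_linearCombination_restrictedY (hn : 1 ≤ n) :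
    LinearMap.ker (Fintype.linearCombination ℂ (restrictedY n)) =
      Submodule.span ℂ {fun p => if p.1 = p.2 then 1 else 0} := by
  apply le_antisymm
  · intro b hb
    rw [mem_ker_linearCombination_restrictedY] at hb
    refine Submodule.mem_span_singleton.2 ⟨b (⟨0, hn⟩, ⟨0, hn⟩), ?_⟩
    ext ⟨l, m⟩
    rcases eq_or_ne l m with rfl | hlm
    · simpa using hb.apply_diag_eq _ l
    · simpa [hlm] using (hb.apply_eq_zero_of_ne hlm).symm
  · rw [Submodule.span_singleton_le_iff_mem, mem_ker_linearCombination_restrictedY]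
    intro x hx
    simpa using sum_Y_diag hx

theorem finrank_span_restrictedY (hn : 1 ≤ n) :
    Module.finrank ℂ (Submodule.span ℂ (Set.range (restrictedY n))) = n ^ 2 - 1 := by
  have h := LinearMap.finrank_range_add_finrank_ker (Fintype.linearCombination ℂ (restrictedY n))
  rw [Fintype.range_linearCombination, ker_linearCombination_restrictedY hn,
    finrank_span_singleton (Function.ne_iff.2 ⟨(⟨0, hn⟩, ⟨0, hn⟩), by simp⟩),
    Module.finrank_fintype_fun_eq_card, Fintype.card_prod, Fintype.card_fin] at h
  rw [sq]
  omega

end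

/-- the only linear relations among the `Y^l_m` (on `{u ≠ 0}`) are that the
off-diagonal coefficients vanish and the diagonal coefficients are all equal; consequently
the span of the `Y^l_m`, as vector fields on `{x : u(x) ≠ 0}`, has dimension `n² - 1`. -/
theorem stmt_5 (n : ℕ) (hn : 1 ≤ n) :
    (∀ a : Fin n → Fin n → ℂ,
      (∀ x : Fin n → ℂ, u n x ≠ 0 → ∑ l : Fin n, ∑ m : Fin n, a l m • Y n l m x = 0) →
      (∀ l m : Fin n, l ≠ m → a l m = 0) ∧ (∀ l m : Fin n, a l l = a m m)) ∧
    Module.finrank ℂ (Submodule.span ℂ (Set.range fun p : Fin n × Fin n =>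
      fun x : {x : Fin n → ℂ // u n x ≠ 0} => Y n p.1 p.2 x.1)) = n ^ 2 - 1 :=
  ⟨fun _ ha => ⟨fun _ _ => IsYRelation.apply_eq_zero_of_ne ha, IsYRelation.apply_diag_eq ha⟩,
    finrank_span_restrictedY hn⟩
end

section
/- Fix an integer n ≥ 1. The vector fields Y^n_1, …, Y^n_{n−1} have polynomial components, namely Y^n_m(x)_i = x_m · u(x)^{n−m−1} · (x_i − δ_{i,n} u(x)) with n − m − 1 ≥ 0 for 1 ≤ m ≤ n−1, and they pairwise commute: [Y^n_m, Y^n_{m'}](x) = 0 for all 1 ≤ m, m' ≤ n−1 and all x ∈ ℂⁿ. Hence they span an (n−1)-dimensional Abelian Lie algebra of polynomial Lie symmetries of the ladder system. -/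
/-!
For `m < l` the field `Y^l_m` is `φ • P`, where `P x = x - u(x) e_l` is the linear projection
onto `ker u` along `e_l` and `φ x = x_m u(x)^(l-m-1)`. As `u ∘ P = 0`, each such `φ` satisfies
`Dφ(x)(P x) = φ x`, and the product rule for Lie brackets turns `[φ • P, ψ • P]` into
`(φ Dψ(P) - ψ Dφ(P)) • P = 0`. For the ladder field `f x = x * A x` one has `A (P x) = c(x) 𝟙`
with `c(x) = ∑ (l - j) x_j` and `u(f x) = u(x)²`; these give `[f, P] = -c • P` and `Dφ(f) = c φ`,
so `[f, φ • P] = 0`. Finally `Y^l_m(e_k)_k = δ_{mk}` for `k ≠ l`, so the fields are linearly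
independent.
-/

namespace VectorField

variable {𝕜 E : Type*} [NontriviallyNormedField 𝕜] [NormedAddCommGroup E] [NormedSpace 𝕜 E]

theorem lieBracket_smul_smul_eq_zero {V : E → E} {f g : E → 𝕜} {x : E} {c : 𝕜}
    (hV : DifferentiableAt 𝕜 V x) (hf : DifferentiableAt 𝕜 f x) (hg : DifferentiableAt 𝕜 g x)
    (hfV : fderiv 𝕜 f x (V x) = c * f x) (hgV : fderiv 𝕜 g x (V x) = c * g x) :
    VectorField.lieBracket 𝕜 (fun y ↦ f y • V y) (fun y ↦ g y • V y) x = 0 := by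
  rw [VectorField.lieBracket_smul_right hg hV, VectorField.lieBracket_smul_left hf hV,
    VectorField.lieBracket_self, map_smul, hfV, hgV, Pi.zero_apply, smul_zero, add_zero,
    smul_eq_mul, smul_smul, ← add_smul]
  convert zero_smul 𝕜 (V x) using 2
  ring

theorem lieBracket_clm_right (V : E → E) (L : E →L[𝕜] E) (x : E) :
    VectorField.lieBracket 𝕜 V L x = L (V x) - fderiv 𝕜 V x (L x) := by
  rw [VectorField.lieBracket, L.fderiv]

end VectorField

section

variable {n : ℕ}

theorem lieBracket_eq_vectorField_lieBracket (V W : (Fin n → ℂ) → Fin n → ℂ) :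
    lieBracket n V W = VectorField.lieBracket ℂ V W :=
  rfl

variable (n) in
noncomputable def uCLM : (Fin n → ℂ) →L[ℂ] ℂ := ∑ j, ContinuousLinearMap.proj j

@[simp] theorem coe_uCLM : ⇑(uCLM n) = u n := by
  ext x; simp [uCLM, u]

variable (n) in
noncomputable def projKerU (l : Fin n) : (Fin n → ℂ) →L[ℂ] Fin n → ℂ :=
  .id ℂ _ - (uCLM n).smulRight (Pi.single l 1)

theorem projKerU_apply (l : Fin n) (x : Fin n → ℂ) (i : Fin n) :
    projKerU n l x i = x i - if i = l then u n x else 0 := by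
  simp [projKerU, Pi.single_apply]

theorem u_projKerU (l : Fin n) (x : Fin n → ℂ) : u n (projKerU n l x) = 0 := by
  simp [u, projKerU_apply, Finset.sum_sub_distrib]

variable (n) in
noncomputable def yCoeff (m : Fin n) (a : ℕ) (x : Fin n → ℂ) : ℂ := x m * u n x ^ a

theorem Y_apply_of_lt {l m : Fin n} (hml : m < l) (x : Fin n → ℂ) (i : Fin n) :
    Y n l m x i = x m * u n x ^ ((l : ℕ) - m - 1) * (x i - if i = l then u n x else 0) := by
  have : ((l : ℤ) - (m : ℤ) - 1) = (((l : ℕ) - m - 1 : ℕ) : ℤ) := by omega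
  rw [Y, this, zpow_natCast]

theorem Y_eq_smul {l m : Fin n} (hml : m < l) :
    Y n l m = fun x ↦ yCoeff n m ((l : ℕ) - m - 1) x • projKerU n l x := by
  ext x i
  rw [Y_apply_of_lt hml, Pi.smul_apply, projKerU_apply, smul_eq_mul, yCoeff]

theorem hasFDerivAt_yCoeff (m : Fin n) (a : ℕ) (x : Fin n → ℂ) :
    HasFDerivAt (yCoeff n m a)
      (u n x ^ a • ContinuousLinearMap.proj m + (x m * a * u n x ^ (a - 1)) • uCLM n) x := by
  have hu : HasFDerivAt (u n) (uCLM n) x := by simpa using (uCLM n).hasFDerivAt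
  refine ((hasFDerivAt_apply m x).mul (hu.pow a)).congr_fderiv ?_
  ext v
  simp only [nsmul_eq_mul, add_apply, smul_apply, coe_uCLM, smul_eq_mul,
    ContinuousLinearMap.proj_apply]
  ring

theorem fderiv_yCoeff_apply (m : Fin n) (a : ℕ) (x v : Fin n → ℂ) :
    fderiv ℂ (yCoeff n m a) x v = u n x ^ a * v m + x m * a * u n x ^ (a - 1) * u n v := by
  simp [(hasFDerivAt_yCoeff m a x).fderiv]

theorem fderiv_yCoeff_projKerU {l m : Fin n} (hml : m ≠ l) (a : ℕ) (x : Fin n → ℂ) :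
    fderiv ℂ (yCoeff n m a) x (projKerU n l x) = yCoeff n m a x := by
  simp [fderiv_yCoeff_apply, projKerU_apply, hml, u_projKerU, yCoeff, mul_comm]

theorem lieBracket_Y_Y {l m m' : Fin n} (hml : m < l) (hm'l : m' < l) (x : Fin n → ℂ) :
    lieBracket n (Y n l m) (Y n l m') x = 0 := by
  rw [Y_eq_smul hml, Y_eq_smul hm'l, lieBracket_eq_vectorField_lieBracket]
  exact VectorField.lieBracket_smul_smul_eq_zero (c := 1) (projKerU n l).differentiableAt
    (hasFDerivAt_yCoeff m _ x).differentiableAt (hasFDerivAt_yCoeff m' _ x).differentiableAt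
    (by rw [one_mul, fderiv_yCoeff_projKerU hml.ne])
    (by rw [one_mul, fderiv_yCoeff_projKerU hm'l.ne])

open Matrix

variable (n) in
def ladderMatrix : Matrix (Fin n) (Fin n) ℂ := Matrix.of fun i j ↦ (((i : ℤ) - j + 1 : ℤ) : ℂ)

variable (n) in
noncomputable def ladderField (x : Fin n → ℂ) : Fin n → ℂ := x * ladderMatrix n *ᵥ x

theorem hasFDerivAt_ladderField (x : Fin n → ℂ) :
    HasFDerivAt (ladderField n)
      (x • (ladderMatrix n).mulVecLin.toContinuousLinearMap +
        (ladderMatrix n *ᵥ x) • ContinuousLinearMap.id ℂ (Fin n → ℂ)) x :=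
  (hasFDerivAt_id x).mul (ladderMatrix n).mulVecLin.toContinuousLinearMap.hasFDerivAt

theorem fderiv_ladderField_apply (x v : Fin n → ℂ) :
    fderiv ℂ (ladderField n) x v = x * ladderMatrix n *ᵥ v + (ladderMatrix n *ᵥ x) * v := by
  simp [(hasFDerivAt_ladderField x).fderiv]

variable (n) in
noncomputable def moment (l : Fin n) (x : Fin n → ℂ) : ℂ :=
  ∑ j : Fin n, (((l : ℕ) : ℂ) - (j : ℕ)) * x j

theorem ladderMatrix_mulVec_apply (l i : Fin n) (x : Fin n → ℂ) :
    (ladderMatrix n *ᵥ x) i = moment n l x + (((i : ℕ) : ℂ) - (l : ℕ) + 1) * u n x := by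
  simp only [Matrix.mulVec, dotProduct, ladderMatrix, Matrix.of_apply, moment, u, Finset.mul_sum,
    ← Finset.sum_add_distrib]
  congr 1 with j
  push_cast
  ring

theorem moment_projKerU (l : Fin n) (x : Fin n → ℂ) :
    moment n l (projKerU n l x) = moment n l x := by
  simp [moment, projKerU_apply, mul_sub, Finset.sum_sub_distrib]

theorem ladderMatrix_mulVec_projKerU (l : Fin n) (x : Fin n → ℂ) :
    ladderMatrix n *ᵥ projKerU n l x = fun _ ↦ moment n l x := by
  ext i
  rw [ladderMatrix_mulVec_apply l, moment_projKerU, u_projKerU, mul_zero, add_zero]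

theorem u_ladderField (x : Fin n → ℂ) : u n (ladderField n x) = u n x ^ 2 := by
  set S := ∑ i : Fin n, ∑ j : Fin n, (((i : ℕ) : ℂ) - (j : ℕ)) * (x i * x j)
  have hS : S = -S := by
    simp only [S]
    conv_lhs => rw [Finset.sum_comm]
    simp only [← Finset.sum_neg_distrib]
    congr 1 with i
    congr 1 with j
    ring
  calc u n (ladderField n x)
      = S + ∑ i, ∑ j, x i * x j := by
        simp only [S, u, ladderField, Pi.mul_apply, mulVec, dotProduct, ladderMatrix, of_apply,
          Finset.mul_sum, ← Finset.sum_add_distrib]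
        congr 1 with i
        congr 1 with j
        push_cast
        ring
    _ = u n x ^ 2 := by
        rw [show S = 0 by linear_combination hS / 2, zero_add, ← Finset.sum_mul_sum, u, sq]

theorem lieBracket_ladderField_projKerU (l : Fin n) (x : Fin n → ℂ) :
    VectorField.lieBracket ℂ (ladderField n) (projKerU n l) x =
      -moment n l x • projKerU n l x := by
  rw [VectorField.lieBracket_clm_right, fderiv_ladderField_apply, ladderMatrix_mulVec_projKerU]
  ext i
  simp only [Pi.sub_apply, Pi.add_apply, Pi.mul_apply, Pi.smul_apply, smul_eq_mul,
    projKerU_apply, u_ladderField]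
  split_ifs with hi
  · subst hi
    simp only [ladderField, Pi.mul_apply, ladderMatrix_mulVec_apply i]
    ring
  · simp only [ladderField, Pi.mul_apply]
    ring

theorem fderiv_yCoeff_ladderField {l m : Fin n} (hml : m < l) (x : Fin n → ℂ) :
    fderiv ℂ (yCoeff n m ((l : ℕ) - m - 1)) x (ladderField n x) =
      moment n l x * yCoeff n m ((l : ℕ) - m - 1) x := by
  set a := (l : ℕ) - m - 1
  have hl : ((l : ℕ) : ℂ) = (m : ℕ) + a + 1 := by
    rw [show (l : ℕ) = m + a + 1 by omega]
    push_cast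
    ring
  have hpow : (a : ℂ) * u n x ^ (a - 1) * u n x ^ 2 = a * u n x ^ a * u n x := by
    cases a with
    | zero => simp
    | succ b => simp only [Nat.add_sub_cancel, pow_succ]; ring
  rw [fderiv_yCoeff_apply, u_ladderField, ladderField, Pi.mul_apply, ladderMatrix_mulVec_apply l,
    hl, yCoeff]
  linear_combination x m * hpow

theorem lieBracket_ladderField_Y {l m : Fin n} (hml : m < l) (x : Fin n → ℂ) :
    lieBracket n (ladderField n) (Y n l m) x = 0 := by
  rw [Y_eq_smul hml, lieBracket_eq_vectorField_lieBracket,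
    VectorField.lieBracket_smul_right (hasFDerivAt_yCoeff m _ x).differentiableAt
      (projKerU n l).differentiableAt,
    lieBracket_ladderField_projKerU,
    fderiv_yCoeff_ladderField hml, smul_smul, ← add_smul]
  convert zero_smul ℂ (projKerU n l x) using 2
  ring

theorem Y_apply_single_self {l k : Fin n} (hkl : k ≠ l) (m : Fin n) :
    Y n l m (Pi.single k 1) k = (Pi.single k 1 : Fin n → ℂ) m := by
  have hu : u n (Pi.single k 1) = 1 := by simp [u]
  simp [Y, hu, hkl]

theorem linearIndependent_Y (l : Fin n) :
    LinearIndependent ℂ fun m : {m : Fin n // m ≠ l} ↦ Y n l m := by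
  let ev : ((Fin n → ℂ) → Fin n → ℂ) →ₗ[ℂ] {m : Fin n // m ≠ l} → ℂ :=
    LinearMap.pi fun k ↦ (LinearMap.proj k.1).comp
      (LinearMap.proj (R := ℂ) (φ := fun _ : Fin n → ℂ ↦ Fin n → ℂ) (Pi.single k.1 1))
  refine .of_comp ev ?_
  convert Pi.linearIndependent_single_one {m : Fin n // m ≠ l} ℂ with m
  ext k
  simp only [ev, Function.comp_apply, LinearMap.pi_apply, LinearMap.comp_apply,
    LinearMap.proj_apply, Y_apply_single_self k.2, Pi.single_apply, Subtype.ext_iff, eq_comm]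

theorem card_fin_val_add_one_lt : Fintype.card {m : Fin n // (m : ℕ) + 1 < n} = n - 1 := by
  rw [Fintype.card_subtype]
  simp_rw [← Nat.lt_sub_iff_add_lt]
  rw [Fin.card_filter_val_lt]
  omega

end

/-- the vector fields `Y^n_1, …, Y^n_{n-1}` (those with upper index `n`,
i.e. the last index, and lower index `m < n`) have polynomial components
`x_m * u(x)^(n-m-1) * (x_i - δ_{i,n} u(x))` (natural-number power), they pairwise commute
everywhere on `ℂⁿ`, they are Lie symmetries of the ladder system, and they span an
`(n-1)`-dimensional (Abelian) Lie algebra. -/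
theorem stmt_7 (n : ℕ) (hn : 1 ≤ n)
    (f : (Fin n → ℂ) → Fin n → ℂ)
    (hf : ∀ x i, f x i = x i * ∑ j : Fin n, (((i : ℤ) - (j : ℤ) + 1 : ℤ) : ℂ) * x j) :
    (∀ m : Fin n, (m : ℕ) + 1 < n → ∀ x : Fin n → ℂ, ∀ i : Fin n,
      Y n ⟨n - 1, by omega⟩ m x i =
        x m * u n x ^ (n - 1 - (m : ℕ) - 1) *
          (x i - if i = (⟨n - 1, by omega⟩ : Fin n) then u n x else 0)) ∧
    (∀ m m' : Fin n, (m : ℕ) + 1 < n → (m' : ℕ) + 1 < n → ∀ x : Fin n → ℂ,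
      lieBracket n (Y n ⟨n - 1, by omega⟩ m) (Y n ⟨n - 1, by omega⟩ m') x = 0) ∧
    (∀ m : Fin n, (m : ℕ) + 1 < n → ∀ x : Fin n → ℂ, u n x ≠ 0 →
      lieBracket n f (Y n ⟨n - 1, by omega⟩ m) x = 0) ∧
    Module.finrank ℂ (Submodule.span ℂ (Set.range
      fun m : {m : Fin n // (m : ℕ) + 1 < n} => Y n ⟨n - 1, by omega⟩ m.1)) = n - 1 := by
  have lt_last (m : Fin n) (hm : (m : ℕ) + 1 < n) : m < ⟨n - 1, by omega⟩ := by
    rw [Fin.lt_def]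
    exact Nat.lt_sub_of_add_lt hm
  have hf_ladder : f = ladderField n := by
    funext x i
    exact hf x i
  refine ⟨fun m hm x i ↦ Y_apply_of_lt (lt_last m hm) x i,
    fun m m' hm hm' x ↦ lieBracket_Y_Y (lt_last m hm) (lt_last m' hm') x,
    fun m hm x _ ↦ hf_ladder ▸ lieBracket_ladderField_Y (lt_last m hm) x, ?_⟩
  have hY := (linearIndependent_Y ⟨n - 1, by omega⟩).comp
    _ (Subtype.impEmbedding _ _ fun m hm ↦ (lt_last m hm).ne).injective
  exact (finrank_span_eq_card hY).trans card_fin_val_add_one_lt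
end

section
/- Fix an integer n ≥ 1 and complex constants α_0, α_1, …, α_n. Then for every x ∈ ℂⁿ with u(x) ≠ 0 and every index 1 ≤ i ≤ n, one has α_0 · u(x) · x_i − u(x) · Σ_{m=1}^n α_m · Y^m_m(x)_i = Σ_{j=1}^n (α_0 + α_i − α_j) · x_i · x_j. That is, the vector field α_0 u D − u Σ_m α_m Y^m_m coincides with the homogeneous Lotka–Volterra vector field with coefficients a_{ij} = α_0 + α_i − α_j (the generalized ladder system), and this identity extends polynomially to all of ℂⁿ. -/
/-! Multiplying by `u` clears the only denominator `u⁻¹` of the diagonal fields `Y^m_m`;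
both sides then become `x_i (α₀ + α_i) u(x) - x_i ∑_j α_j x_j`. -/

open Finset

theorem Y_self_apply (n : ℕ) (m i : Fin n) (x : Fin n → ℂ) :
    Y n m m x i = x m * (u n x)⁻¹ * (x i - if i = m then u n x else 0) := by
  simp only [Y, sub_self, zero_sub, zpow_neg_one]

theorem u_mul_Y_self_apply {n : ℕ} {x : Fin n → ℂ} (hu : u n x ≠ 0) (m i : Fin n) :
    u n x * Y n m m x i = x m * (x i - if i = m then u n x else 0) := by
  rw [Y_self_apply]
  field_simp

theorem u_mul_sum_mul_Y_self_apply {n : ℕ} {x : Fin n → ℂ} (hu : u n x ≠ 0) (α : Fin n → ℂ)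
    (i : Fin n) :
    u n x * ∑ m, α m * Y n m m x i = x i * ∑ m, α m * x m - α i * x i * u n x := by
  calc u n x * ∑ m, α m * Y n m m x i
      = ∑ m, (x i * (α m * x m) - if i = m then α m * x m * u n x else 0) := by
        rw [mul_sum]
        refine sum_congr rfl fun m _ => ?_
        rw [mul_left_comm, u_mul_Y_self_apply hu]
        split_ifs <;> ring
    _ = x i * ∑ m, α m * x m - α i * x i * u n x := by
        rw [sum_sub_distrib, ← mul_sum, sum_ite_eq]
        simp

theorem sum_ladder_coeff_mul {n : ℕ} (α₀ : ℂ) (α x : Fin n → ℂ) (i : Fin n) :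
    ∑ j, (α₀ + α i - α j) * x i * x j = (α₀ + α i) * x i * u n x - x i * ∑ j, α j * x j := by
  simp only [u, mul_sum, ← sum_sub_distrib]
  exact sum_congr rfl fun j _ => by ring

theorem stmt_10_general (n : ℕ) (α₀ : ℂ) (α : Fin n → ℂ) :
    ∀ x : Fin n → ℂ, u n x ≠ 0 → ∀ i : Fin n,
      α₀ * u n x * x i - u n x * ∑ m : Fin n, α m * Y n m m x i =
        ∑ j : Fin n, (α₀ + α i - α j) * x i * x j := by
  intro x hu i
  rw [u_mul_sum_mul_Y_self_apply hu, sum_ladder_coeff_mul]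
  ring

/-- the vector field `α₀ u D - u ∑_m α_m Y^m_m` coincides, wherever
`u(x) ≠ 0`, with the homogeneous Lotka–Volterra vector field with coefficients
`a_{ij} = α₀ + α_i - α_j` (the generalized ladder system). -/
theorem stmt_10 (n : ℕ) (hn : 1 ≤ n) (α₀ : ℂ) (α : Fin n → ℂ) :
    ∀ x : Fin n → ℂ, u n x ≠ 0 → ∀ i : Fin n,
      α₀ * u n x * x i - u n x * ∑ m : Fin n, α m * Y n m m x i =
        ∑ j : Fin n, (α₀ + α i - α j) * x i * x j :=
  stmt_10_general n α₀ α
end
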